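/- arXiv:2008.08719 — 3 statements merged into one kernel-verified Lean document; each statement's English description precedes it below -/
import Mathlib

section
/- Let h > 0 and θ = (θ₁, θ₂) ∈ [−π/2, 3π/2)² with θ ≠ (0,0). Let L̃_h(θ) be the 3×3 complex matrix with rows (a, 0, b₁), (0, a, b₂), (−b₁, −b₂, 0), where a = (4 − 2cos θ₁ − 2cos θ₂)/h² and b_m = (2ı/h)·sin(θ_m/2) for m = 1, 2. Then L̃_h(θ) is invertible. -/
/-- For frequencies `θ ∈ [−π/2, 3π/2)²` with `θ ≠ (0,0)`, the LFA symbol of the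
MAC-discretized Stokes operator is invertible. -/
theorem mac_stokes_symbol_invertible
    (h θ₁ θ₂ : ℝ) (hh : 0 < h)
    (hθ₁l : -(Real.pi / 2) ≤ θ₁) (hθ₁u : θ₁ < 3 * Real.pi / 2)
    (hθ₂l : -(Real.pi / 2) ≤ θ₂) (hθ₂u : θ₂ < 3 * Real.pi / 2)
    (hθ : (θ₁, θ₂) ≠ (0, 0))
    (a b₁ b₂ : ℂ)
    (ha : a = (4 - 2 * (Real.cos θ₁ : ℂ) - 2 * (Real.cos θ₂ : ℂ)) / (h : ℂ) ^ 2)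
    (hb₁ : b₁ = (2 * Complex.I / (h : ℂ)) * (Real.sin (θ₁ / 2) : ℂ))
    (hb₂ : b₂ = (2 * Complex.I / (h : ℂ)) * (Real.sin (θ₂ / 2) : ℂ)) :
    IsUnit (!![a, 0, b₁; 0, a, b₂; -b₁, -b₂, 0] : Matrix (Fin 3) (Fin 3) ℂ) := by
  have hpi := Real.pi_pos
  -- sin(θ/2) vanishing forces θ = 0 on this range
  have key : ∀ θ : ℝ, -(Real.pi / 2) ≤ θ → θ < 3 * Real.pi / 2 →
      Real.sin (θ / 2) = 0 → θ = 0 := by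
    intro θ hl hu hs
    have h1 : -Real.pi < θ / 2 := by linarith
    have h2 : θ / 2 < Real.pi := by linarith
    have := Real.sin_eq_zero_iff_of_lt_of_lt h1 h2
    have : θ / 2 = 0 := this.mp hs
    linarith
  set s₁ := Real.sin (θ₁ / 2) with hs₁
  set s₂ := Real.sin (θ₂ / 2) with hs₂
  have hs : s₁ ^ 2 + s₂ ^ 2 ≠ 0 := by
    intro hcon
    have h1 : s₁ = 0 := by nlinarith [sq_nonneg s₁, sq_nonneg s₂]
    have h2 : s₂ = 0 := by nlinarith [sq_nonneg s₁, sq_nonneg s₂]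
    exact hθ (Prod.ext (key θ₁ hθ₁l hθ₁u h1) (key θ₂ hθ₂l hθ₂u h2))
  have hcosr : ∀ θ : ℝ, Real.cos θ = 1 - 2 * Real.sin (θ / 2) ^ 2 := by
    intro θ
    have h2 : 2 * (θ / 2) = θ := by ring
    have := Real.cos_two_mul (θ / 2)
    rw [h2, Real.cos_sq'] at this
    linarith
  have hcos₁ : (Real.cos θ₁ : ℂ) = 1 - 2 * (s₁ : ℂ) ^ 2 := by
    rw [hcosr θ₁, ← hs₁]; push_cast; ring
  have hcos₂ : (Real.cos θ₂ : ℂ) = 1 - 2 * (s₂ : ℂ) ^ 2 := by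
    rw [hcosr θ₂, ← hs₂]; push_cast; ring
  have hhC : (h : ℂ) ≠ 0 := by exact_mod_cast hh.ne'
  have hsC : (s₁ : ℂ) ^ 2 + (s₂ : ℂ) ^ 2 ≠ 0 := by exact_mod_cast hs
  rw [Matrix.isUnit_iff_isUnit_det, isUnit_iff_ne_zero]
  have hb1sq : b₁ ^ 2 = -(4 * (s₁ : ℂ) ^ 2) / (h : ℂ) ^ 2 := by
    rw [hb₁, mul_pow, div_pow, mul_pow, Complex.I_sq]; ring
  have hb2sq : b₂ ^ 2 = -(4 * (s₂ : ℂ) ^ 2) / (h : ℂ) ^ 2 := by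
    rw [hb₂, mul_pow, div_pow, mul_pow, Complex.I_sq]; ring
  have hdet : (!![a, 0, b₁; 0, a, b₂; -b₁, -b₂, 0] : Matrix (Fin 3) (Fin 3) ℂ).det
      = -16 * ((s₁ : ℂ) ^ 2 + (s₂ : ℂ) ^ 2) ^ 2 / (h : ℂ) ^ 4 := by
    have e : (!![a, 0, b₁; 0, a, b₂; -b₁, -b₂, 0] : Matrix (Fin 3) (Fin 3) ℂ).det
        = a * (b₁ ^ 2 + b₂ ^ 2) := by
      rw [Matrix.det_fin_three]
      simp [Matrix.cons_val_zero, Matrix.cons_val_one]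
      ring
    rw [e, ha, hb1sq, hb2sq, hcos₁, hcos₂]
    field_simp
    ring
  rw [hdet]
  exact div_ne_zero (by simp [hsC]) (pow_ne_zero _ hhC)
end

section
/- Let h > 0, ω ≠ 0, θ = (θ₁, θ₂) ∈ ℝ², and c = (c₁, c₂, c₃) ∈ ℂ³. Define the staggered Fourier modes u_{i,j} = exp(ı(θ₁i + θ₂(j+1/2))), v_{i,j} = exp(ı(θ₁(i+1/2) + θ₂j)), p_{i,j} = exp(ı(θ₁(i+1/2) + θ₂(j+1/2))), and the grid functions U = c₁u, V = c₂v, P = c₃p. Then for every (i,j) ∈ ℤ², the triad-Gauss-Seidel iteration operator satisfies: (1/h²)((4/ω)U_{i,j} − U_{i−1,j} − U_{i,j−1}) + (1/h)((1/ω)P_{i,j} − P_{i−1,j}) = m₁·u_{i,j}, (1/h²)((4/ω)V_{i,j} − V_{i−1,j} − V_{i,j−1}) + (1/h)((1/ω)P_{i,j} − P_{i,j−1}) = m₂·v_{i,j}, and (1/(ωh))(U_{i,j} + V_{i,j}) = m₃·p_{i,j}, where (m₁, m₂, m₃) = M̃_h(θ)c and M̃_h(θ) is the 3×3 matrix [[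 (1/h²)(4/ω − e^{−ıθ₁} − e^{−ıθ₂}), 0, (1/h)((1/ω)e^{ıθ₁/2} − e^{−ıθ₁/2}) ], [ 0, (1/h²)(4/ω − e^{−ıθ₁} − e^{−ıθ₂}), (1/h)((1/ω)e^{ıθ₂/2} − e^{−ıθ₂/2}) ], [ (1/(ωh))e^{−ıθ₁/2}, (1/(ωh))e^{−ıθ₂/2}, 0 ]]. -/
/-- The triad-Gauss-Seidel iteration operator maps the vector Fourier mode with coefficient
vector `c` to the vector Fourier mode with coefficient vector `M̃_h(θ)c`, where `M̃_h(θ)`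
is the weighted Gauss-Seidel triad symbol matrix. -/
theorem triad_gauss_seidel_symbol
    (h ω θ₁ θ₂ : ℝ) (hh : 0 < h) (hω : ω ≠ 0) (c₁ c₂ c₃ : ℂ)
    (u v p U V P : ℤ → ℤ → ℂ)
    (hu : ∀ i j : ℤ, u i j =
      Complex.exp (Complex.I * ((θ₁ : ℂ) * (i : ℂ) + (θ₂ : ℂ) * ((j : ℂ) + 1/2))))
    (hv : ∀ i j : ℤ, v i j =
      Complex.exp (Complex.I * ((θ₁ : ℂ) * ((i : ℂ) + 1/2) + (θ₂ : ℂ) * (j : ℂ))))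
    (hp : ∀ i j : ℤ, p i j =
      Complex.exp (Complex.I * ((θ₁ : ℂ) * ((i : ℂ) + 1/2) + (θ₂ : ℂ) * ((j : ℂ) + 1/2))))
    (hU : ∀ i j : ℤ, U i j = c₁ * u i j)
    (hV : ∀ i j : ℤ, V i j = c₂ * v i j)
    (hP : ∀ i j : ℤ, P i j = c₃ * p i j)
    (M : Matrix (Fin 3) (Fin 3) ℂ)
    (hM : M =
      !![(1 / (h : ℂ) ^ 2) * (4 / (ω : ℂ) - Complex.exp (-(Complex.I * (θ₁ : ℂ)))
            - Complex.exp (-(Complex.I * (θ₂ : ℂ)))), 0,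
         (1 / (h : ℂ)) * ((1 / (ω : ℂ)) * Complex.exp (Complex.I * (θ₁ : ℂ) / 2)
            - Complex.exp (-(Complex.I * (θ₁ : ℂ) / 2)));
         0, (1 / (h : ℂ) ^ 2) * (4 / (ω : ℂ) - Complex.exp (-(Complex.I * (θ₁ : ℂ)))
            - Complex.exp (-(Complex.I * (θ₂ : ℂ)))),
         (1 / (h : ℂ)) * ((1 / (ω : ℂ)) * Complex.exp (Complex.I * (θ₂ : ℂ) / 2)
            - Complex.exp (-(Complex.I * (θ₂ : ℂ) / 2)));
         (1 / ((ω : ℂ) * (h : ℂ))) * Complex.exp (-(Complex.I * (θ₁ : ℂ) / 2)),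
         (1 / ((ω : ℂ) * (h : ℂ))) * Complex.exp (-(Complex.I * (θ₂ : ℂ) / 2)), 0])
    (m : Fin 3 → ℂ) (hm : m = Matrix.mulVec M ![c₁, c₂, c₃]) :
    ∀ i j : ℤ,
      (1 / (h : ℂ) ^ 2) * ((4 / (ω : ℂ)) * U i j - U (i - 1) j - U i (j - 1)) +
          (1 / (h : ℂ)) * ((1 / (ω : ℂ)) * P i j - P (i - 1) j) = m 0 * u i j ∧
      (1 / (h : ℂ) ^ 2) * ((4 / (ω : ℂ)) * V i j - V (i - 1) j - V i (j - 1)) +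
          (1 / (h : ℂ)) * ((1 / (ω : ℂ)) * P i j - P i (j - 1)) = m 1 * v i j ∧
      (1 / ((ω : ℂ) * (h : ℂ))) * (U i j + V i j) = m 2 * p i j := by
  intro i j
  have hh' : (h : ℂ) ≠ 0 := by exact_mod_cast hh.ne'
  have hω' : (ω : ℂ) ≠ 0 := by exact_mod_cast hω
  set A : ℂ := Complex.exp (Complex.I * (θ₁ : ℂ) / 2) with hA
  set B : ℂ := Complex.exp (Complex.I * (θ₂ : ℂ) / 2) with hB
  have hA0 : A ≠ 0 := Complex.exp_ne_zero _
  have hB0 : B ≠ 0 := Complex.exp_ne_zero _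
  have eAinv : Complex.exp (-(Complex.I * (θ₁ : ℂ))) = A⁻¹ * A⁻¹ := by
    rw [hA, ← Complex.exp_neg, ← Complex.exp_add]; congr 1; ring
  have eBinv : Complex.exp (-(Complex.I * (θ₂ : ℂ))) = B⁻¹ * B⁻¹ := by
    rw [hB, ← Complex.exp_neg, ← Complex.exp_add]; congr 1; ring
  have eAhinv : Complex.exp (-(Complex.I * (θ₁ : ℂ) / 2)) = A⁻¹ := by
    rw [hA, ← Complex.exp_neg]
  have eBhinv : Complex.exp (-(Complex.I * (θ₂ : ℂ) / 2)) = B⁻¹ := by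
    rw [hB, ← Complex.exp_neg]
  have hu1 : u (i - 1) j = A⁻¹ * A⁻¹ * u i j := by
    rw [hu, hu, ← eAinv, ← Complex.exp_add]; congr 1; push_cast; ring
  have hu2 : u i (j - 1) = B⁻¹ * B⁻¹ * u i j := by
    rw [hu, hu, ← eBinv, ← Complex.exp_add]; congr 1; push_cast; ring
  have hv1 : v (i - 1) j = A⁻¹ * A⁻¹ * v i j := by
    rw [hv, hv, ← eAinv, ← Complex.exp_add]; congr 1; push_cast; ring
  have hv2 : v i (j - 1) = B⁻¹ * B⁻¹ * v i j := by
    rw [hv, hv, ← eBinv, ← Complex.exp_add]; congr 1; push_cast; ring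
  have hpu : p i j = A * u i j := by
    rw [hp, hu, hA, ← Complex.exp_add]; congr 1; push_cast; ring
  have hpu1 : p (i - 1) j = A⁻¹ * u i j := by
    rw [hp, hu, ← eAhinv, ← Complex.exp_add]; congr 1; push_cast; ring
  have hpv : p i j = B * v i j := by
    rw [hp, hv, hB, ← Complex.exp_add]; congr 1; push_cast; ring
  have hpv2 : p i (j - 1) = B⁻¹ * v i j := by
    rw [hp, hv, ← eBhinv, ← Complex.exp_add]; congr 1; push_cast; ring
  have hup : u i j = A⁻¹ * p i j := by
    rw [hpu]; field_simp
  have hvp : v i j = B⁻¹ * p i j := by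
    rw [hpv]; field_simp
  have hm0 : m 0 = (1 / (h : ℂ) ^ 2) * (4 / (ω : ℂ) - A⁻¹ * A⁻¹ - B⁻¹ * B⁻¹) * c₁
      + (1 / (h : ℂ)) * ((1 / (ω : ℂ)) * A - A⁻¹) * c₃ := by
    simp [hm, hM, Matrix.mulVec, dotProduct, Fin.sum_univ_three,
      eAinv, eBinv, eAhinv, eBhinv, hA, hB]
    ring
  have hm1 : m 1 = (1 / (h : ℂ) ^ 2) * (4 / (ω : ℂ) - A⁻¹ * A⁻¹ - B⁻¹ * B⁻¹) * c₂
      + (1 / (h : ℂ)) * ((1 / (ω : ℂ)) * B - B⁻¹) * c₃ := by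
    simp [hm, hM, Matrix.mulVec, dotProduct, Fin.sum_univ_three,
      eAinv, eBinv, eAhinv, eBhinv, hA, hB]
    ring
  have hm2 : m 2 = (1 / ((ω : ℂ) * (h : ℂ))) * A⁻¹ * c₁
      + (1 / ((ω : ℂ) * (h : ℂ))) * B⁻¹ * c₂ := by
    simp [hm, hM, Matrix.mulVec, dotProduct, Fin.sum_univ_three,
      eAinv, eBinv, eAhinv, eBhinv, hA, hB]
    ring
  refine ⟨?_, ?_, ?_⟩
  · rw [hU, hU, hU, hP, hP, hu1, hu2, hpu, hpu1, hm0]; ring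
  · rw [hV, hV, hV, hP, hP, hv1, hv2, hpv, hpv2, hm1]; ring
  · rw [hU, hV, hup, hvp, hm2]; ring
end

section
/- Let h > 0, ω ≠ 0, θ = (θ₁, θ₂) ∈ ℝ², and c ∈ ℂ³. Let L̃_h(θ) be the 3×3 matrix with rows (a, 0, b₁), (0, a, b₂), (−b₁, −b₂, 0) where a = (4 − 2cos θ₁ − 2cos θ₂)/h², b_m = (2ı/h)sin(θ_m/2), and let M̃_h(θ) = (1/ω)·[[4/h², 0, e^{ıθ₁/2}/h], [0, 4/h², e^{ıθ₂/2}/h], [e^{−ıθ₁/2}/h, e^{−ıθ₂/2}/h, 0]], which is invertible. Define the staggered Fourier modes u_{i,j} = exp(ı(θ₁i + θ₂(j+1/2))), v_{i,j} = exp(ı(θ₁(i+1/2) + θ₂j)), p_{i,j} = exp(ı(θ₁(i+1/2) + θ₂(j+1/2))). Let c' = M̃_h(θ)⁻¹ L̃_h(θ) c. Then the staggered grid function (c'₁u, c'₂v, c'₃p) satisfies, at every (i,j) ∈ ℤ², M_h(c'₁u, c'₂v, c'₃p) = L_h(c₁u, c₂v, c₃p), where M_h is the triad-Jacobi iteration operator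 and L_h is the MAC-discretized Stokes operator; consequently one step of triad-Jacobi relaxation maps the vector Fourier mode with coefficients c to the vector Fourier mode with coefficients (I − M̃_h(θ)⁻¹L̃_h(θ))c. -/
/-- One step of triad-Jacobi relaxation: with `c' = M̃_h(θ)⁻¹ L̃_h(θ) c` (the symbol `M̃_h(θ)`
being invertible), the staggered grid function with Fourier coefficients `c'` satisfies
`M_h(c'₁u, c'₂v, c'₃p) = L_h(c₁u, c₂v, c₃p)` at every grid point, so triad-Jacobi relaxation
maps the vector Fourier mode with coefficients `c` to the one with coefficients
`(I − M̃_h(θ)⁻¹L̃_h(θ))c`. -/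
theorem triad_jacobi_error_propagation_symbol
    (h ω θ₁ θ₂ : ℝ) (hh : 0 < h) (hω : ω ≠ 0) (c : Fin 3 → ℂ)
    (u v p : ℤ → ℤ → ℂ)
    (hu : ∀ i j : ℤ, u i j =
      Complex.exp (Complex.I * ((θ₁ : ℂ) * (i : ℂ) + (θ₂ : ℂ) * ((j : ℂ) + 1/2))))
    (hv : ∀ i j : ℤ, v i j =
      Complex.exp (Complex.I * ((θ₁ : ℂ) * ((i : ℂ) + 1/2) + (θ₂ : ℂ) * (j : ℂ))))
    (hp : ∀ i j : ℤ, p i j =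
      Complex.exp (Complex.I * ((θ₁ : ℂ) * ((i : ℂ) + 1/2) + (θ₂ : ℂ) * ((j : ℂ) + 1/2))))
    (L M : Matrix (Fin 3) (Fin 3) ℂ)
    (hL : L =
      !![(4 - 2 * (Real.cos θ₁ : ℂ) - 2 * (Real.cos θ₂ : ℂ)) / (h : ℂ) ^ 2, 0,
           (2 * Complex.I / (h : ℂ)) * (Real.sin (θ₁ / 2) : ℂ);
         0, (4 - 2 * (Real.cos θ₁ : ℂ) - 2 * (Real.cos θ₂ : ℂ)) / (h : ℂ) ^ 2,
           (2 * Complex.I / (h : ℂ)) * (Real.sin (θ₂ / 2) : ℂ);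
         -((2 * Complex.I / (h : ℂ)) * (Real.sin (θ₁ / 2) : ℂ)),
         -((2 * Complex.I / (h : ℂ)) * (Real.sin (θ₂ / 2) : ℂ)), 0])
    (hM : M = (1 / (ω : ℂ)) •
      !![4 / (h : ℂ) ^ 2, 0, Complex.exp (Complex.I * (θ₁ : ℂ) / 2) / (h : ℂ);
         0, 4 / (h : ℂ) ^ 2, Complex.exp (Complex.I * (θ₂ : ℂ) / 2) / (h : ℂ);
         Complex.exp (-(Complex.I * (θ₁ : ℂ) / 2)) / (h : ℂ),
         Complex.exp (-(Complex.I * (θ₂ : ℂ) / 2)) / (h : ℂ), 0])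
    (c' : Fin 3 → ℂ) (hc' : c' = Matrix.mulVec M⁻¹ (Matrix.mulVec L c)) :
    IsUnit M ∧
    ∀ i j : ℤ,
      (1 / (ω : ℂ)) * ((4 / (h : ℂ) ^ 2) * (c' 0 * u i j) + (1 / (h : ℂ)) * (c' 2 * p i j)) =
        (1 / (h : ℂ) ^ 2) * (4 * (c 0 * u i j) - c 0 * u (i - 1) j - c 0 * u (i + 1) j
            - c 0 * u i (j - 1) - c 0 * u i (j + 1)) +
          (c 2 * p i j - c 2 * p (i - 1) j) / (h : ℂ) ∧
      (1 / (ω : ℂ)) * ((4 / (h : ℂ) ^ 2) * (c' 1 * v i j) + (1 / (h : ℂ)) * (c' 2 * p i j)) =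
        (1 / (h : ℂ) ^ 2) * (4 * (c 1 * v i j) - c 1 * v (i - 1) j - c 1 * v (i + 1) j
            - c 1 * v i (j - 1) - c 1 * v i (j + 1)) +
          (c 2 * p i j - c 2 * p i (j - 1)) / (h : ℂ) ∧
      (1 / ((ω : ℂ) * (h : ℂ))) * (c' 0 * u i j + c' 1 * v i j) =
        -((c 0 * u (i + 1) j - c 0 * u i j) / (h : ℂ)) -
          (c 1 * v i (j + 1) - c 1 * v i j) / (h : ℂ) := by
  have hh' : (h : ℂ) ≠ 0 := by exact_mod_cast hh.ne'
  have hω' : (ω : ℂ) ≠ 0 := by exact_mod_cast hω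
  set X : ℂ := Complex.exp (Complex.I * (θ₁ : ℂ) / 2) with hX
  set X' : ℂ := Complex.exp (-(Complex.I * (θ₁ : ℂ) / 2)) with hX'
  set Y : ℂ := Complex.exp (Complex.I * (θ₂ : ℂ) / 2) with hY
  set Y' : ℂ := Complex.exp (-(Complex.I * (θ₂ : ℂ) / 2)) with hY'
  have h1 : X * X' = 1 := by rw [hX, hX', ← Complex.exp_add]; ring_nf; exact Complex.exp_zero
  have h2 : Y * Y' = 1 := by rw [hY, hY', ← Complex.exp_add]; ring_nf; exact Complex.exp_zero
  have hMunit : IsUnit M := by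
    have hdet : M.det = -(8 / ((ω : ℂ) ^ 3 * (h : ℂ) ^ 4)) := by
      rw [hM, Matrix.det_smul]
      simp [Matrix.det_fin_three]
      linear_combination (-4 / ((ω : ℂ) ^ 3 * (h : ℂ) ^ 4)) * h1 +
        (-4 / ((ω : ℂ) ^ 3 * (h : ℂ) ^ 4)) * h2
    rw [Matrix.isUnit_iff_isUnit_det, hdet]
    simp [isUnit_iff_ne_zero, hω', hh']
  refine ⟨hMunit, ?_⟩
  have hdet' : IsUnit M.det := (Matrix.isUnit_iff_isUnit_det M).mp hMunit
  have key : M.mulVec c' = L.mulVec c := by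
    rw [hc', Matrix.mulVec_mulVec, Matrix.mul_nonsing_inv _ hdet', Matrix.one_mulVec]
  have e0 : (1 / (ω : ℂ)) * (4 / (h : ℂ) ^ 2 * c' 0 + X / (h : ℂ) * c' 2) =
      (4 - 2 * Complex.cos (θ₁ : ℂ) - 2 * Complex.cos (θ₂ : ℂ)) / (h : ℂ) ^ 2 * c 0 +
        2 * Complex.I / (h : ℂ) * Complex.sin ((θ₁ : ℂ) / 2) * c 2 := by
    have := congrFun key 0
    rw [hM, hL] at this
    simp [Matrix.mulVec, dotProduct, Fin.sum_univ_three] at this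
    linear_combination this
  have e1 : (1 / (ω : ℂ)) * (4 / (h : ℂ) ^ 2 * c' 1 + Y / (h : ℂ) * c' 2) =
      (4 - 2 * Complex.cos (θ₁ : ℂ) - 2 * Complex.cos (θ₂ : ℂ)) / (h : ℂ) ^ 2 * c 1 +
        2 * Complex.I / (h : ℂ) * Complex.sin ((θ₂ : ℂ) / 2) * c 2 := by
    have := congrFun key 1
    rw [hM, hL] at this
    simp [Matrix.mulVec, dotProduct, Fin.sum_univ_three] at this
    linear_combination this
  have e2 : (1 / (ω : ℂ)) * (X' / (h : ℂ) * c' 0 + Y' / (h : ℂ) * c' 1) =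
      -(2 * Complex.I / (h : ℂ) * Complex.sin ((θ₁ : ℂ) / 2)) * c 0 +
        -(2 * Complex.I / (h : ℂ) * Complex.sin ((θ₂ : ℂ) / 2)) * c 1 := by
    have := congrFun key 2
    rw [hM, hL] at this
    simp [Matrix.mulVec, dotProduct, Fin.sum_univ_three] at this
    linear_combination this
  have hcos1 : 2 * Complex.cos (θ₁ : ℂ) = X * X + X' * X' := by
    rw [Complex.cos, hX, hX', ← Complex.exp_add, ← Complex.exp_add]
    rw [show Complex.I * (θ₁ : ℂ) / 2 + Complex.I * (θ₁ : ℂ) / 2 = (θ₁ : ℂ) * Complex.I by ring,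
      show -(Complex.I * (θ₁ : ℂ) / 2) + -(Complex.I * (θ₁ : ℂ) / 2) = -(θ₁ : ℂ) * Complex.I by
        ring]
    ring
  have hcos2 : 2 * Complex.cos (θ₂ : ℂ) = Y * Y + Y' * Y' := by
    rw [Complex.cos, hY, hY', ← Complex.exp_add, ← Complex.exp_add]
    rw [show Complex.I * (θ₂ : ℂ) / 2 + Complex.I * (θ₂ : ℂ) / 2 = (θ₂ : ℂ) * Complex.I by ring,
      show -(Complex.I * (θ₂ : ℂ) / 2) + -(Complex.I * (θ₂ : ℂ) / 2) = -(θ₂ : ℂ) * Complex.I by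
        ring]
    ring
  have hsin1 : 2 * Complex.I * Complex.sin ((θ₁ : ℂ) / 2) = X - X' := by
    rw [Complex.sin,
      show -((θ₁ : ℂ) / 2) * Complex.I = -(Complex.I * (θ₁ : ℂ) / 2) by ring,
      show ((θ₁ : ℂ) / 2) * Complex.I = Complex.I * (θ₁ : ℂ) / 2 by ring,
      ← hX, ← hX']
    linear_combination (X' - X) * Complex.I_sq
  have hsin2 : 2 * Complex.I * Complex.sin ((θ₂ : ℂ) / 2) = Y - Y' := by
    rw [Complex.sin,
      show -((θ₂ : ℂ) / 2) * Complex.I = -(Complex.I * (θ₂ : ℂ) / 2) by ring,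
      show ((θ₂ : ℂ) / 2) * Complex.I = Complex.I * (θ₂ : ℂ) / 2 by ring,
      ← hY, ← hY']
    linear_combination (Y' - Y) * Complex.I_sq
  intro i j
  have sup : u (i + 1) j = X * X * u i j := by
    rw [hu, hu, hX, ← Complex.exp_add, ← Complex.exp_add]; congr 1; push_cast; ring
  have sum' : u (i - 1) j = X' * X' * u i j := by
    rw [hu, hu, hX', ← Complex.exp_add, ← Complex.exp_add]; congr 1; push_cast; ring
  have sujp : u i (j + 1) = Y * Y * u i j := by
    rw [hu, hu, hY, ← Complex.exp_add, ← Complex.exp_add]; congr 1; push_cast; ring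
  have sujm : u i (j - 1) = Y' * Y' * u i j := by
    rw [hu, hu, hY', ← Complex.exp_add, ← Complex.exp_add]; congr 1; push_cast; ring
  have svp : v (i + 1) j = X * X * v i j := by
    rw [hv, hv, hX, ← Complex.exp_add, ← Complex.exp_add]; congr 1; push_cast; ring
  have svm : v (i - 1) j = X' * X' * v i j := by
    rw [hv, hv, hX', ← Complex.exp_add, ← Complex.exp_add]; congr 1; push_cast; ring
  have svjp : v i (j + 1) = Y * Y * v i j := by
    rw [hv, hv, hY, ← Complex.exp_add, ← Complex.exp_add]; congr 1; push_cast; ring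
  have svjm : v i (j - 1) = Y' * Y' * v i j := by
    rw [hv, hv, hY', ← Complex.exp_add, ← Complex.exp_add]; congr 1; push_cast; ring
  have hPu : p i j = X * u i j := by
    rw [hp, hu, hX, ← Complex.exp_add]; congr 1; push_cast; ring
  have hPmu : p (i - 1) j = X' * u i j := by
    rw [hp, hu, hX', ← Complex.exp_add]; congr 1; push_cast; ring
  have hPv : p i j = Y * v i j := by
    rw [hp, hv, hY, ← Complex.exp_add]; congr 1; push_cast; ring
  have hPmv : p i (j - 1) = Y' * v i j := by
    rw [hp, hv, hY', ← Complex.exp_add]; congr 1; push_cast; ring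
  have hUp : u i j = X' * p i j := by
    rw [hp, hu, hX', ← Complex.exp_add]; congr 1; push_cast; ring
  have hU1p : u (i + 1) j = X * p i j := by
    rw [hp, hu, hX, ← Complex.exp_add]; congr 1; push_cast; ring
  have hVp : v i j = Y' * p i j := by
    rw [hp, hv, hY', ← Complex.exp_add]; congr 1; push_cast; ring
  have hV1p : v i (j + 1) = Y * p i j := by
    rw [hp, hv, hY, ← Complex.exp_add]; congr 1; push_cast; ring
  refine ⟨?_, ?_, ?_⟩
  · rw [sup, sum', sujp, sujm, hPu, hPmu]
    linear_combination (u i j) * e0 - (c 0 * u i j / (h : ℂ) ^ 2) * hcos1 -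
      (c 0 * u i j / (h : ℂ) ^ 2) * hcos2 + (c 2 * u i j / (h : ℂ)) * hsin1
  · rw [svp, svm, svjp, svjm, hPv, hPmv]
    linear_combination (v i j) * e1 - (c 1 * v i j / (h : ℂ) ^ 2) * hcos1 -
      (c 1 * v i j / (h : ℂ) ^ 2) * hcos2 + (c 2 * v i j / (h : ℂ)) * hsin2
  · rw [hU1p, hUp, hV1p, hVp]
    linear_combination (p i j) * e2 - (c 0 * p i j / (h : ℂ)) * hsin1 -
      (c 1 * p i j / (h : ℂ)) * hsin2
end
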